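/- arXiv:2303.03829 — 2 statements merged into one kernel-verified Lean document; each statement's English description precedes it below -/
import Mathlib

section
/- Decrease attack: Suppose every Byzantine user b ∈ V_B sends to user i the vector x_b = x_i + (S − C − x_i) / W_B, where S = Σ_{j∈V_R} W_{ij}·x_j, C = Σ_{j∈V_R} W_{ij} Clip(x_j − x_i, τ_i), and W_B = Σ_{b∈V_B} W_{ib} > 0. If ‖(S − C − x_i) / W_B‖ ≤ τ_i, then the aggregated update satisfies SCClip_i(x_1, …, x_n; τ_i) = Σ_{j∈V_R} W_{ij}·x_j; i.e., user i is forced onto the (unrenormalized) weighted average of the honest vectors, bypassing the clipping defense. -/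
open Finset

/-- Norm clipping: `Clip z τ = min 1 (τ/‖z‖) • z` (with `Clip 0 τ = 0`).
Note `Clip z τ = z` whenever `‖z‖ ≤ τ`. -/
noncomputable def Clip {d : ℕ} (z : EuclideanSpace ℝ (Fin d)) (τ : ℝ) :
    EuclideanSpace ℝ (Fin d) :=
  (min 1 (τ / ‖z‖)) • z

/-- Self-centered clipping aggregation of user `i` (own vector `xi`) over
the user set `V` with weights `W` and radius `τ`:
`SCClip_i(x₁,…,xₙ; τ) = ∑_{j∈V} W_{ij} (x_i + Clip(x_j − x_i, τ))`. -/
noncomputable def SCClip {ι : Type*} {d : ℕ} (V : Finset ι) (W : ι → ℝ)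
    (xi : EuclideanSpace ℝ (Fin d)) (x : ι → EuclideanSpace ℝ (Fin d)) (τ : ℝ) :
    EuclideanSpace ℝ (Fin d) :=
  ∑ j ∈ V, W j • (xi + Clip (x j - xi) τ)

lemma Clip_of_norm_le {d : ℕ} {z : EuclideanSpace ℝ (Fin d)} {τ : ℝ}
    (h : ‖z‖ ≤ τ) : Clip z τ = z := by
  unfold Clip
  rcases eq_or_ne z 0 with rfl | hz
  · simp
  · have hnz : 0 < ‖z‖ := norm_pos_iff.mpr hz
    have : (1 : ℝ) ≤ τ / ‖z‖ := (one_le_div hnz).mpr h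
    rw [min_eq_left this, one_smul]

/-- Decrease attack: the aggregate is forced onto the (unrenormalized)
weighted average of the honest vectors, bypassing the clipping defense. -/
theorem decrease_attack {ι : Type*} [DecidableEq ι] {d : ℕ} (V VR : Finset ι) (hVR : VR ⊆ V)
    (W : ι → ℝ) (hW0 : ∀ j ∈ V, 0 ≤ W j) (hW1 : ∑ j ∈ V, W j = 1)
    (i : ι) (hi : i ∈ VR) (τ : ℝ) (hτ : 0 ≤ τ)
    (x : ι → EuclideanSpace ℝ (Fin d))
    (S : EuclideanSpace ℝ (Fin d)) (hS : S = ∑ j ∈ VR, W j • x j)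
    (C : EuclideanSpace ℝ (Fin d)) (hC : C = ∑ j ∈ VR, W j • Clip (x j - x i) τ)
    (WB : ℝ) (hWB : WB = ∑ b ∈ V \ VR, W b) (hWBpos : 0 < WB)
    (hsend : ∀ b ∈ V \ VR, x b = x i + WB⁻¹ • (S - C - x i))
    (hnoclipB : ‖WB⁻¹ • (S - C - x i)‖ ≤ τ) :
    SCClip V W (x i) x τ = ∑ j ∈ VR, W j • x j := by
  unfold SCClip
  rw [← Finset.sum_sdiff hVR]
  have hbyz : ∑ j ∈ V \ VR, W j • (x i + Clip (x j - x i) τ)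
      = WB • (x i + WB⁻¹ • (S - C - x i)) := by
    have : ∀ b ∈ V \ VR, W b • (x i + Clip (x b - x i) τ)
        = W b • (x i + WB⁻¹ • (S - C - x i)) := by
      intro b hb
      rw [hsend b hb]; congr 2
      simp only [add_sub_cancel_left]
      rw [Clip_of_norm_le hnoclipB]
    rw [Finset.sum_congr rfl this, ← Finset.sum_smul, ← hWB]
  have hreg : ∑ j ∈ VR, W j • (x i + Clip (x j - x i) τ)
      = (∑ j ∈ VR, W j) • x i + C := by
    rw [hC, Finset.sum_smul, ← Finset.sum_add_distrib]
    exact Finset.sum_congr rfl fun j _ => smul_add _ _ _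
  rw [hbyz, hreg, smul_add, smul_inv_smul₀ hWBpos.ne']
  have hsum : (∑ j ∈ VR, W j) = 1 - WB := by
    have := Finset.sum_sdiff hVR (f := W)
    rw [hW1] at this; rw [hWB]; linarith [this]
  rw [hsum, ← hS]
  rw [sub_smul, one_smul]
  abel
end

section
/- Simple τ manipulation attack: Suppose every Byzantine user b ∈ V_B sends to user i the vector x_b = x_i − S, where S = Σ_{j∈V_R} W_{ij}·x_j, and let W_B = Σ_{b∈V_B} W_{ib}. If ‖x_j − x_i‖ ≤ τ_i for every regular user j ∈ V_R and ‖S‖ ≤ τ_i (so that no clipping is active), then the aggregated update satisfies SCClip_i(x_1, …, x_n; τ_i) = x_i + (1 − W_B)·(S − x_i). -/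
open Finset

lemma Clip_eq_self {d : ℕ} (z : EuclideanSpace ℝ (Fin d)) (τ : ℝ)
    (h : ‖z‖ ≤ τ) : Clip z τ = z := by
  unfold Clip
  rcases eq_or_ne z 0 with hz | hz
  · simp [hz]
  · have hz' : (0:ℝ) < ‖z‖ := norm_pos_iff.mpr hz
    have : (1:ℝ) ≤ τ / ‖z‖ := (one_le_div hz').mpr h
    rw [min_eq_left this, one_smul]

/-- Simple τ manipulation attack. -/
theorem simple_tau_manipulation {ι : Type*} [DecidableEq ι] {d : ℕ} (V VR : Finset ι) (hVR : VR ⊆ V)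
    (W : ι → ℝ) (hW0 : ∀ j ∈ V, 0 ≤ W j) (hW1 : ∑ j ∈ V, W j = 1)
    (i : ι) (hi : i ∈ VR) (τ : ℝ) (hτ : 0 ≤ τ)
    (x : ι → EuclideanSpace ℝ (Fin d))
    (S : EuclideanSpace ℝ (Fin d)) (hS : S = ∑ j ∈ VR, W j • x j)
    (WB : ℝ) (hWB : WB = ∑ b ∈ V \ VR, W b)
    (hsend : ∀ b ∈ V \ VR, x b = x i - S)
    (hnoclipR : ∀ j ∈ VR, ‖x j - x i‖ ≤ τ)
    (hnoclipB : ‖S‖ ≤ τ) :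
    SCClip V W (x i) x τ = x i + (1 - WB) • (S - x i) := by
  unfold SCClip
  rw [← Finset.sum_sdiff hVR]
  have hR : ∀ j ∈ VR, W j • (x i + Clip (x j - x i) τ) = W j • x j := by
    intro j hj
    rw [Clip_eq_self _ _ (hnoclipR j hj)]
    congr 1
    abel
  have hB : ∀ b ∈ V \ VR, W b • (x i + Clip (x b - x i) τ)
      = W b • (x i - S) := by
    intro b hb
    have : x b - x i = -S := by rw [hsend b hb]; abel
    rw [this, Clip_eq_self _ _ (by simpa using hnoclipB)]
    congr 1
  rw [Finset.sum_congr rfl hR, Finset.sum_congr rfl hB, ← hS,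
    ← Finset.sum_smul, ← hWB]
  rw [sub_smul, one_smul, smul_sub, smul_sub]
  abel
end
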